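/- arXiv:2204.02705 — 3 statements merged into one kernel-verified Lean document; each statement's English description precedes it below -/
import Mathlib

section
/- There is no non-trivial partition regular class of points of Cantor space that is an Fσ set. Precisely: let L be a set of points of Cantor space ℕ → Bool (with the product topology) which, under the identification of x : ℕ → Bool with the set {n : x n = true}, is partition regular, i.e., L is nonempty, x ∈ L together with (∀ n, x n = true → y n = true) implies y ∈ L, and whenever x ∈ L and x is pointwise below the pointwise supremum of finitely many points y₀,…,y_k, then some y_i ∈ L. If L is a countable union of closed subsets of ℕ → Bool, then L contains a point x such that {n : x n = true} is finite. -/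
/-!
If `L` is partition regular then `ℕ ∈ L`, so every set or its complement lies in `L`. Hence
Cantor space is covered by the closed sets `F k` and their images under complementation. By the
Baire category theorem one of them has nonempty interior, and since the finite sets and the
cofinite sets are both dense, some `F k ⊆ L` contains a finite set.
-/

open Set Filter

theorem dense_setOf_eventually_cofinite_eq {ι X : Type*} [TopologicalSpace X] (c : X) :
    Dense {x : ι → X | ∀ᶠ i in cofinite, x i = c} := by
  classical
  refine fun x => mem_closure_of_tendsto (b := atTop)
    (f := fun s : Finset ι => s.piecewise x fun _ => c) ?_ (Eventually.of_forall fun s => ?_)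
  · refine tendsto_pi_nhds.2 fun i => tendsto_const_nhds.congr' ?_
    filter_upwards [eventually_ge_atTop {i}] with s hs
    exact (s.piecewise_eq_of_mem _ _ (hs (Finset.mem_singleton_self i))).symm
  · filter_upwards [s.finite_toSet.compl_mem_cofinite] with i hi
    exact s.piecewise_eq_of_notMem _ _ hi

theorem exists_mem_finite_of_forall_exists_xor_mem {L : Set (ℕ → Bool)}
    {F : ℕ → Set (ℕ → Bool)} (hF : ∀ n, IsClosed (F n)) (hLF : L = ⋃ n, F n)
    (hxor : ∀ x : ℕ → Bool, ∃ b, (fun n => xor (x n) b) ∈ L) :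
    ∃ x ∈ L, {n : ℕ | x n = true}.Finite := by
  let G : Bool × ℕ → Set (ℕ → Bool) := fun p => (fun x n => xor (x n) p.1) ⁻¹' F p.2
  have hG_closed : ∀ p, IsClosed (G p) := fun p => (hF p.2).preimage (by fun_prop)
  have hG_cover : ⋃ p, G p = univ := by
    refine eq_univ_of_forall fun x => ?_
    obtain ⟨b, hb⟩ := hxor x
    obtain ⟨k, hk⟩ := mem_iUnion.1 (hLF ▸ hb)
    exact mem_iUnion.2 ⟨(b, k), hk⟩
  obtain ⟨⟨b, k⟩, hint⟩ := nonempty_interior_of_iUnion_of_closed hG_closed hG_cover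
  obtain ⟨x, hxG, hxb⟩ :=
    (dense_setOf_eventually_cofinite_eq b).inter_open_nonempty _ isOpen_interior hint
  have hxF : (fun n => xor (x n) b) ∈ F k := (interior_subset hxG : x ∈ G (b, k))
  refine ⟨_, hLF ▸ mem_iUnion_of_mem k hxF, (eventually_cofinite.1 hxb).subset fun n hn => ?_⟩
  cases x n <;> cases b <;> simp_all

/-- There is no non-trivial Fσ (boldface Σ⁰₂) partition regular class of points of
Cantor space: any partition regular `L ⊆ ℕ → Bool` which is a countable union of closed
sets contains a point whose corresponding subset of `ℕ` is finite. -/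
theorem no_nontrivial_sigma02_partitionRegular (L : Set (ℕ → Bool))
    (hne : L.Nonempty)
    (hup : ∀ x ∈ L, ∀ y : ℕ → Bool, (∀ n, x n = true → y n = true) → y ∈ L)
    (hcover : ∀ x ∈ L, ∀ (k : ℕ) (y : Fin (k + 1) → ℕ → Bool),
      (∀ n, x n = true → ∃ i, y i n = true) → ∃ i, y i ∈ L)
    (F : ℕ → Set (ℕ → Bool)) (hF : ∀ n, IsClosed (F n)) (hLF : L = ⋃ n, F n) :
    ∃ x ∈ L, {n : ℕ | x n = true}.Finite := by
  obtain ⟨z, hz⟩ := hne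
  have htop : (fun _ => true) ∈ L := hup z hz _ fun _ _ => rfl
  refine exists_mem_finite_of_forall_exists_xor_mem hF hLF fun x => ?_
  obtain ⟨i, hi⟩ := hcover _ htop 1 ![x, fun n => !x n] fun n _ => by
    cases h : x n
    · exact ⟨1, by simp [h]⟩
    · exact ⟨0, by simp [h]⟩
  fin_cases i
  · exact ⟨false, by simpa using hi⟩
  · exact ⟨true, by simpa using hi⟩
end

section
/- A class A of subsets of ℕ is partition large if and only if A is upward closed and contains a partition regular subclass. -/
/-!
If `A` is partition large, take for `L` the sets `X` such that every finite cover of `X` has a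
part in `A`. It contains `ℕ`, lies in `A` (cover `X` by itself) and is partition regular: were
no part `Yᵢ` of a cover of `X ∈ L` in `L`, each `Yᵢ` would have a finite cover avoiding `A`, and
together these would form a finite cover of `X` avoiding `A`. Conversely, a cover of `ℕ` covers
any member of a partition regular `L ⊆ A`.
-/

/-- A class `L` of subsets of `ℕ` is partition regular if it is nonempty, upward closed,
and for every `X ∈ L` and every finite cover `Y₀, …, Y_k` of `X`, some `Y_i ∈ L`. -/
def PartitionRegular (L : Set (Set ℕ)) : Prop :=
  L.Nonempty ∧
  (∀ X Y : Set ℕ, X ∈ L → X ⊆ Y → Y ∈ L) ∧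
  (∀ X ∈ L, ∀ (k : ℕ) (Y : Fin (k + 1) → Set ℕ), X ⊆ ⋃ i, Y i → ∃ i, Y i ∈ L)

/-- A class `A` of subsets of `ℕ` is partition large if it is nonempty, upward closed,
and every finite cover of `ℕ` has a part in `A`. -/
def PartitionLarge (A : Set (Set ℕ)) : Prop :=
  A.Nonempty ∧
  (∀ X Y : Set ℕ, X ∈ A → X ⊆ Y → Y ∈ A) ∧
  (∀ (k : ℕ) (Y : Fin (k + 1) → Set ℕ), (Set.univ : Set ℕ) ⊆ ⋃ i, Y i → ∃ i, Y i ∈ A)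

variable {α : Type*}

def PartitionLargeOn (A : Set (Set α)) (X : Set α) : Prop :=
  ∀ s : Set (Set α), s.Finite → X ⊆ ⋃₀ s → ∃ Y ∈ s, Y ∈ A

namespace PartitionLargeOn

variable {A : Set (Set α)} {X : Set α}

theorem mono {X' : Set α} (hXX' : X ⊆ X') (h : PartitionLargeOn A X) :
    PartitionLargeOn A X' :=
  fun s hs hX' => h s hs (hXX'.trans hX')

theorem mem (h : PartitionLargeOn A X) : X ∈ A := by
  obtain ⟨Y, rfl, hY⟩ := h {X} (Set.finite_singleton X) (by simp)
  exact hY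

theorem exists_of_subset_iUnion (h : PartitionLargeOn A X) {ι : Type*} [Finite ι]
    (Y : ι → Set α) (hXY : X ⊆ ⋃ i, Y i) : ∃ i, PartitionLargeOn A (Y i) := by
  by_contra! hY
  simp only [PartitionLargeOn, not_forall, not_exists, not_and, exists_prop] at hY
  choose t ht_finite hYt ht using hY
  have hXt : X ⊆ ⋃₀ ⋃ i, t i := by
    rw [Set.sUnion_iUnion]
    exact hXY.trans (Set.iUnion_mono hYt)
  obtain ⟨Z, hZt, hZA⟩ := h _ (Set.finite_iUnion ht_finite) hXt
  obtain ⟨i, hZi⟩ := Set.mem_iUnion.mp hZt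
  exact ht i Z hZi hZA

theorem of_forall_fin (hX : X.Nonempty)
    (h : ∀ (k : ℕ) (Y : Fin (k + 1) → Set α), X ⊆ ⋃ i, Y i → ∃ i, Y i ∈ A) :
    PartitionLargeOn A X := by
  intro s hs hXs
  obtain ⟨_ | k, f, rfl⟩ := hs.fin_embedding
  · obtain ⟨x, hx⟩ := hX
    simpa using hXs hx
  · rw [Set.sUnion_range] at hXs
    obtain ⟨i, hi⟩ := h k f hXs
    exact ⟨f i, Set.mem_range_self i, hi⟩

end PartitionLargeOn

theorem PartitionLarge.partitionRegular_setOf_partitionLargeOn {A : Set (Set ℕ)}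
    (hA : PartitionLarge A) : PartitionRegular {X | PartitionLargeOn A X} :=
  ⟨⟨Set.univ, PartitionLargeOn.of_forall_fin Set.univ_nonempty hA.2.2⟩,
    fun _ _ hX hXY => hX.mono hXY,
    fun _ hX _ Y hXY => hX.exists_of_subset_iUnion Y hXY⟩

theorem PartitionRegular.partitionLarge_of_subset {L A : Set (Set ℕ)} (hL : PartitionRegular L)
    (hLA : L ⊆ A) (hA : ∀ X Y : Set ℕ, X ∈ A → X ⊆ Y → Y ∈ A) : PartitionLarge A := by
  obtain ⟨⟨X₀, hX₀⟩, -, hL_cover⟩ := hL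
  refine ⟨⟨X₀, hLA hX₀⟩, hA, fun k Y hY => ?_⟩
  obtain ⟨i, hi⟩ := hL_cover X₀ hX₀ k Y ((Set.subset_univ X₀).trans hY)
  exact ⟨i, hLA hi⟩

/-- A class is partition large iff it is upward closed and contains a partition regular
subclass. -/
theorem partitionLarge_iff (A : Set (Set ℕ)) :
    PartitionLarge A ↔
      ((∀ X Y : Set ℕ, X ∈ A → X ⊆ Y → Y ∈ A) ∧
        ∃ L : Set (Set ℕ), PartitionRegular L ∧ L ⊆ A) := by
  constructor
  · intro hA
    exact ⟨hA.2.1, _, hA.partitionRegular_setOf_partitionLargeOn, fun _ hX => hX.mem⟩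
  · rintro ⟨hA, L, hL, hLA⟩
    exact hL.partitionLarge_of_subset hLA hA
end

section
/- Let A ⊆ U₂ be a partition large class of subsets of ℕ, where U₂ = {X ⊆ ℕ : X has at least two distinct elements}. Then L(A) = {X ⊆ ℕ : A ∩ L_X is partition large}, where L(A) = {X ⊆ ℕ : for every finite cover X₀,…,X_k of X there is some i with X_i ∈ A} is the largest partition regular subclass of A, and L_X = {Y ⊆ ℕ : Y ∩ X is infinite}. -/
/-- `LargestPR A` is the largest partition regular subclass of `A` (when nonempty):
the sets all of whose finite covers have a part in `A`. -/
def LargestPR (A : Set (Set ℕ)) : Set (Set ℕ) :=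
  {X : Set ℕ | ∀ (k : ℕ) (Y : Fin (k + 1) → Set ℕ), X ⊆ ⋃ i, Y i → ∃ i, Y i ∈ A}

open Set

theorem PartitionLarge.univ_mem_largestPR {A : Set (Set ℕ)} (hA : PartitionLarge A) :
    univ ∈ LargestPR A :=
  hA.2.2

namespace LargestPR

variable {A B : Set (Set ℕ)} {X : Set ℕ}

theorem mono (h : A ⊆ B) : LargestPR A ⊆ LargestPR B := fun _ hX k Y hY =>
  (hX k Y hY).imp fun _ hi => h hi

theorem exists_mem (hX : X ∈ LargestPR A) {ι : Type*} [Finite ι] [Nonempty ι]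
    {Y : ι → Set ℕ} (h : X ⊆ ⋃ i, Y i) : ∃ i, Y i ∈ A := by
  obtain ⟨n, ⟨e⟩⟩ := Finite.exists_equiv_fin ι
  obtain ⟨k, rfl⟩ := Nat.exists_eq_succ_of_ne_zero (e (Classical.arbitrary ι)).pos.ne'
  obtain ⟨i, hi⟩ := hX k (Y ∘ e.symm) <| by
    rwa [Function.comp_def, e.symm.surjective.iUnion_comp]
  exact ⟨e.symm i, hi⟩

theorem exists_mem_of_subset_union_iUnion (hA : ∀ Y ∈ A, Y.Nontrivial)
    (hX : X ∈ LargestPR A) {ι : Type*} [Finite ι] {Y : ι → Set ℕ} {F : Set ℕ}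
    (hF : F.Finite) (h : X ⊆ F ∪ ⋃ i, Y i) : ∃ i, Y i ∈ A := by
  have : Finite F := hF
  obtain ⟨j, hj⟩ := exists_mem hX
    (Y := fun j : Option (ι ⊕ F) => j.elim ∅ (Sum.elim Y fun x => {x.1})) (by
      intro x hx
      rcases h hx with hxF | hxY
      · exact mem_iUnion.2 ⟨some (.inr ⟨x, hxF⟩), rfl⟩
      · obtain ⟨i, hi⟩ := mem_iUnion.1 hxY
        exact mem_iUnion.2 ⟨some (.inl i), hi⟩)
  rcases j with _ | i | x
  · exact absurd (hA _ hj) not_nontrivial_empty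
  · exact ⟨i, hj⟩
  · exact absurd (hA _ hj) not_nontrivial_singleton

theorem exists_mem_inter_infinite (hA : ∀ Y ∈ A, Y.Nontrivial) (hX : X ∈ LargestPR A)
    {ι : Type*} [Finite ι] {Y : ι → Set ℕ} (h : X ⊆ ⋃ i, Y i) :
    ∃ i, Y i ∈ A ∧ (Y i ∩ X).Infinite := by
  obtain ⟨⟨i, hinf⟩, hi⟩ := exists_mem_of_subset_union_iUnion hA hX
    (Y := fun i : {i // (Y i ∩ X).Infinite} => Y i)
    (finite_iUnion fun i : {i // (Y i ∩ X).Finite} => i.2) (by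
      intro x hx
      obtain ⟨i, hi⟩ := mem_iUnion.1 (h hx)
      by_cases hfin : (Y i ∩ X).Finite
      · exact Or.inl (mem_iUnion.2 ⟨⟨i, hfin⟩, hi, hx⟩)
      · exact Or.inr (mem_iUnion.2 ⟨⟨i, hfin⟩, hi⟩))
  exact ⟨i, hi, hinf⟩

theorem mem_of_univ_mem_of_compl_notMem (hU : univ ∈ LargestPR A) (hX : Xᶜ ∉ A) :
    X ∈ LargestPR A := by
  intro k Y hY
  obtain ⟨j, hj⟩ := exists_mem hU (Y := fun j : Option (Fin (k + 1)) => j.elim Xᶜ Y) (by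
    intro x _
    by_cases hx : x ∈ X
    · obtain ⟨i, hi⟩ := mem_iUnion.1 (hY hx)
      exact mem_iUnion.2 ⟨some i, hi⟩
    · exact mem_iUnion.2 ⟨none, hx⟩)
  rcases j with _ | i
  · exact absurd hj hX
  · exact ⟨i, hj⟩

end LargestPR

/-- For a partition large class `A ⊆ U₂`, the largest partition regular subclass of `A`
is exactly the class of `X` such that `A ∩ L_X` is partition large. -/
theorem largestPR_eq_large_inter_LX (A : Set (Set ℕ)) (hA : PartitionLarge A)
    (hsub : A ⊆ {X : Set ℕ | ∃ a ∈ X, ∃ b ∈ X, a ≠ b}) :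
    LargestPR A = {X : Set ℕ | PartitionLarge (A ∩ {Y : Set ℕ | (Y ∩ X).Infinite})} := by
  ext X
  constructor
  · intro hX
    obtain ⟨-, hU⟩ := LargestPR.exists_mem_inter_infinite hsub hX (Y := fun _ : Unit => univ)
      fun _ _ => mem_iUnion.2 ⟨(), trivial⟩
    refine ⟨⟨univ, hU⟩, fun Y Z hY hYZ => ⟨hA.2.1 Y Z hY.1 hYZ, ?_⟩, fun k Y hY => ?_⟩
    · exact hY.2.mono (inter_subset_inter_left X hYZ)
    · exact LargestPR.exists_mem_inter_infinite hsub hX ((subset_univ X).trans hY)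
  · intro hL
    refine LargestPR.mono inter_subset_left
      (LargestPR.mem_of_univ_mem_of_compl_notMem hL.univ_mem_largestPR ?_)
    simp
end
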